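/- arXiv:2503.22332 — 2 statements merged into one kernel-verified Lean document; each statement's English description precedes it below -/
import Mathlib

section
/- Let H be a commutative multiplicative hyperring of characteristic 2. If H is regular and every hyperideal of H is a C-hyperideal, then every nonzero proper strong C-hyperideal of H is an sdf-absorbing hyperideal of H. -/
open Pointwise

/-- A commutative multiplicative hyperring structure on an abelian group `H`. -/
structure MulHyperring (H : Type*) [AddCommGroup H] where
  hmul : H → H → Set H
  hmul_nonempty : ∀ x y : H, (hmul x y).Nonempty
  hmul_comm : ∀ x y : H, hmul x y = hmul y x
  hmul_assoc : ∀ x y z : H, (⋃ a ∈ hmul y z, hmul x a) = ⋃ b ∈ hmul x y, hmul b z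
  hmul_distrib : ∀ x y z : H, hmul x (y + z) ⊆ hmul x y + hmul x z
  hmul_neg : ∀ x y : H, hmul x (-y) = -(hmul x y)

namespace Hyper

variable {H : Type*} [AddCommGroup H] (mul : H → H → Set H)

/-- `P` is a hyperideal. -/
def IsIdeal (P : Set H) : Prop :=
  (0 : H) ∈ P ∧ (∀ x ∈ P, ∀ y ∈ P, x - y ∈ P) ∧ ∀ r : H, ∀ x ∈ P, mul r x ⊆ P

/-- Hyperproduct `a ∘ b₁ ∘ ⋯ ∘ bₙ`. -/
def hprod : H → List H → Set H
  | a, [] => {a}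
  | a, b :: l => ⋃ t ∈ mul a b, hprod t l

/-- `C` is a finite hyperproduct `c₁ ∘ ⋯ ∘ cₙ`. -/
def IsProduct (C : Set H) : Prop := ∃ (a : H) (l : List H), C = hprod mul a l

/-- `D` is a finite (nonempty) sum of finite hyperproducts. -/
def IsSum (D : Set H) : Prop :=
  ∃ L : List (Set H), L ≠ [] ∧ (∀ C ∈ L, IsProduct mul C) ∧ D = L.sum

/-- `P` is a `𝒞`-hyperideal. -/
def IsCIdeal (P : Set H) : Prop :=
  IsIdeal mul P ∧ ∀ C : Set H, IsProduct mul C → (C ∩ P).Nonempty → C ⊆ P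

/-- `P` is a strong `𝒞`-hyperideal. -/
def IsStrongCIdeal (P : Set H) : Prop :=
  IsIdeal mul P ∧ ∀ D : Set H, IsSum mul D → (D ∩ P).Nonempty → D ⊆ P

/-- The hypersquare `x² = x ∘ x`. -/
def sq (x : H) : Set H := mul x x

/-- `P` is an sdf-absorbing hyperideal. -/
def IsSdf (P : Set H) : Prop :=
  IsIdeal mul P ∧ P ≠ Set.univ ∧
    ∀ x y : H, x ≠ 0 → y ≠ 0 → sq mul x - sq mul y ⊆ P → x - y ∈ P ∨ x + y ∈ P

/-- `P` is a weakly sdf-absorbing hyperideal. -/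
def IsWeaklySdf (P : Set H) : Prop :=
  IsIdeal mul P ∧ P ≠ Set.univ ∧
    ∀ x y : H, x ≠ 0 → y ≠ 0 → (0 : H) ∉ sq mul x - sq mul y →
      sq mul x - sq mul y ⊆ P → x - y ∈ P ∨ x + y ∈ P

/-- `P` is a prime hyperideal. -/
def IsPrime (P : Set H) : Prop :=
  IsIdeal mul P ∧ P ≠ Set.univ ∧ ∀ x y : H, mul x y ⊆ P → x ∈ P ∨ y ∈ P

/-- The radical: intersection of the prime hyperideals containing `P`. -/
def rad (P : Set H) : Set H := ⋂₀ {Q : Set H | IsPrime mul Q ∧ P ⊆ Q}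

/-- `hpow mul x n` is the hyperpower `x^(n+1)`. -/
def hpow (x : H) (n : ℕ) : Set H := hprod mul x (List.replicate n x)

/-- `x` is nilpotent: `0 ∈ xⁿ` for some `n`. -/
def IsNilpotent (x : H) : Prop := ∃ n : ℕ, (0 : H) ∈ hpow mul x n

/-- `x` is a regular element: `x ∈ x² ∘ y` for some `y`. -/
def IsRegularElem (x : H) : Prop := ∃ y : H, x ∈ ⋃ t ∈ sq mul x, mul t y

/-- The hyperideal generated by a set `S`. -/
def span (S : Set H) : Set H := ⋂₀ {Q : Set H | IsIdeal mul Q ∧ S ⊆ Q}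

/-- `P` is a maximal hyperideal. -/
def IsMaximal (P : Set H) : Prop :=
  IsIdeal mul P ∧ P ≠ Set.univ ∧
    ∀ B : Set H, IsIdeal mul B → P ⊆ B → B = P ∨ B = Set.univ

end Hyper

/-- Componentwise hypermultiplication on a product. -/
def prodMul {H₁ H₂ : Type*} (m₁ : H₁ → H₁ → Set H₁) (m₂ : H₂ → H₂ → Set H₂) :
    H₁ × H₂ → H₁ × H₂ → Set (H₁ × H₂) :=
  fun a b => (m₁ a.1 b.1) ×ˢ (m₂ a.2 b.2)

/-!
Distributivity gives `(x + y)² ⊆ x² + xy + xy + y²`, and in characteristic 2 this sum of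
hyperproducts contains `a + c + c + b = a - b` for any `a ∈ x²`, `b ∈ y²`, `c ∈ xy`. So if
`x² - y²` meets the strong `𝒞`-hyperideal `P`, the whole sum, hence `(x + y)²`, lies in `P`;
regularity `x + y ∈ (x + y)² ∘ z` then puts `x + y` in `P`.
-/

namespace Hyper

lemma isProduct_mul {H : Type*} (mul : H → H → Set H) (a b : H) : IsProduct mul (mul a b) :=
  ⟨a, [b], by simp [hprod]⟩

variable {H : Type*} [AddCommGroup H]

lemma IsProduct.isSum {mul : H → H → Set H} {C : Set H} (hC : IsProduct mul C) :
    IsSum mul C :=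
  ⟨[C], List.cons_ne_nil _ _, by simpa using hC, (List.sum_singleton).symm⟩

lemma IsSum.add {mul : H → H → Set H} {D E : Set H} (hD : IsSum mul D) (hE : IsSum mul E) :
    IsSum mul (D + E) := by
  obtain ⟨L, hL, hLprod, rfl⟩ := hD
  obtain ⟨K, -, hKprod, rfl⟩ := hE
  refine ⟨L ++ K, by simp [hL], fun C hC => ?_, List.sum_append.symm⟩
  rcases List.mem_append.1 hC with hC | hC
  exacts [hLprod C hC, hKprod C hC]

lemma IsIdeal.mem_of_isRegularElem (M : MulHyperring H) {P : Set H}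
    (hP : IsIdeal M.hmul P) {x : H} (hx : IsRegularElem M.hmul x) (hsq : sq M.hmul x ⊆ P) :
    x ∈ P := by
  obtain ⟨z, hz⟩ := hx
  obtain ⟨t, ht, hxtz⟩ := Set.mem_iUnion₂.1 hz
  have htzP : M.hmul t z ⊆ P := M.hmul_comm z t ▸ hP.2.2 z t (hsq ht)
  exact htzP hxtz

end Hyper

namespace MulHyperring

variable {H : Type*} [AddCommGroup H] (M : MulHyperring H)

lemma hmul_add_add_subset (x y : H) :
    M.hmul (x + y) (x + y) ⊆ M.hmul x x + M.hmul x y + M.hmul x y + M.hmul y y := by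
  intro t ht
  obtain ⟨u, hu, v, hv, rfl⟩ := M.hmul_distrib (x + y) x y ht
  rw [M.hmul_comm] at hu hv
  obtain ⟨u₁, hu₁, u₂, hu₂, rfl⟩ := M.hmul_distrib x x y hu
  obtain ⟨v₁, hv₁, v₂, hv₂, rfl⟩ := M.hmul_distrib y x y hv
  rw [M.hmul_comm] at hv₁
  show u₁ + u₂ + (v₁ + v₂) ∈ _
  rw [← add_assoc]
  exact Set.add_mem_add (Set.add_mem_add (Set.add_mem_add hu₁ hu₂) hv₁) hv₂

lemma isSum_hmul_add_add (x y : H) :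
    Hyper.IsSum M.hmul (M.hmul x x + M.hmul x y + M.hmul x y + M.hmul y y) :=
  (((Hyper.isProduct_mul _ x x).isSum.add (Hyper.isProduct_mul _ x y).isSum).add
    (Hyper.isProduct_mul _ x y).isSum).add (Hyper.isProduct_mul _ y y).isSum

lemma sq_add_subset_of_isStrongCIdeal (hchar : ∀ x : H, x + x = 0) {P : Set H}
    (hP : Hyper.IsStrongCIdeal M.hmul P) {x y : H}
    (hxy : ((Hyper.sq M.hmul x - Hyper.sq M.hmul y) ∩ P).Nonempty) :
    Hyper.sq M.hmul (x + y) ⊆ P := by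
  obtain ⟨_, ⟨⟨a, ha, b, hb, rfl⟩, habP⟩⟩ := hxy
  obtain ⟨c, hc⟩ := M.hmul_nonempty x y
  have hab : a + c + c + b = a - b := by
    rw [sub_eq_add_neg, neg_eq_of_add_eq_zero_left (hchar b), add_assoc a c c, hchar c,
      add_zero]
  have habD : a - b ∈ M.hmul x x + M.hmul x y + M.hmul x y + M.hmul y y :=
    hab ▸ Set.add_mem_add (Set.add_mem_add (Set.add_mem_add ha hc) hc) hb
  exact (M.hmul_add_add_subset x y).trans
    (hP.2 _ (M.isSum_hmul_add_add x y) ⟨a - b, habD, habP⟩)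

end MulHyperring

theorem stmt5_general {H : Type*} [AddCommGroup H] (M : MulHyperring H)
    (hchar : ∀ x : H, x + x = 0)
    (hreg : ∀ x : H, Hyper.IsRegularElem M.hmul x) :
    ∀ P : Set H, Hyper.IsStrongCIdeal M.hmul P → P ≠ ({0} : Set H) → P ≠ Set.univ →
      Hyper.IsSdf M.hmul P := by
  intro P hP _ hPu
  refine ⟨hP.1, hPu, fun x y _ _ hsub => Or.inr ?_⟩
  obtain ⟨a, ha⟩ := M.hmul_nonempty x x
  obtain ⟨b, hb⟩ := M.hmul_nonempty y y
  have hmeet : ((Hyper.sq M.hmul x - Hyper.sq M.hmul y) ∩ P).Nonempty :=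
    ⟨a - b, ⟨Set.sub_mem_sub ha hb, hsub (Set.sub_mem_sub ha hb)⟩⟩
  exact hP.1.mem_of_isRegularElem M (hreg (x + y))
    (M.sq_add_subset_of_isStrongCIdeal hchar hP hmeet)

/-- in characteristic 2, if `H` is regular and every hyperideal is a
`𝒞`-hyperideal, then every nonzero proper strong `𝒞`-hyperideal is sdf-absorbing. -/
theorem stmt5 {H : Type*} [AddCommGroup H] (M : MulHyperring H)
    (hchar : ∀ x : H, x + x = 0)
    (hreg : ∀ x : H, Hyper.IsRegularElem M.hmul x)
    (hall : ∀ P : Set H, Hyper.IsIdeal M.hmul P → Hyper.IsCIdeal M.hmul P) :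
    ∀ P : Set H, Hyper.IsStrongCIdeal M.hmul P → P ≠ ({0} : Set H) → P ≠ Set.univ →
      Hyper.IsSdf M.hmul P :=
  stmt5_general M hchar hreg
end

section
/- Let H₁, H₂ be commutative multiplicative hyperrings and P₁ a nonzero proper strong C-hyperideal of H₁. Then P₁ is an sdf-absorbing hyperideal of H₁ if and only if P₁ × H₂ is an sdf-absorbing hyperideal of H₁ × H₂. -/
open Pointwise

/-!
An sdf-absorbing `P` with a nonzero element `p` satisfies the sdf condition also when `x` or
`y` is `0`: if `0² - y² ⊆ P` then `y² ⊆ P`, hence `y² - p² ⊆ P`, and absorption gives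
`y ∓ p ∈ P`, so `y ∈ P`. In `H₁ × H₂` the square `(x, y)²` is `x² ×ˢ y²`, and hyperproducts
are nonempty, so `(x, y)² - (x', y')² ⊆ P ×ˢ univ` just says `x² - x'² ⊆ P`. A nonzero pair
may have first coordinate `0`, which is why the extended condition is needed; conversely,
test the product condition on `(x, 0)` and `(y, 0)`.
-/

open Set

namespace Hyper

section Ideal

variable {H : Type*} [AddCommGroup H] {mul : H → H → Set H} {P A B : Set H}

theorem IsIdeal.sub_mem (hP : IsIdeal mul P) {x y : H} (hx : x ∈ P) (hy : y ∈ P) :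
    x - y ∈ P :=
  hP.2.1 x hx y hy

theorem IsIdeal.neg_mem (hP : IsIdeal mul P) {x : H} (hx : x ∈ P) : -x ∈ P := by
  simpa using hP.sub_mem hP.1 hx

theorem IsIdeal.add_mem (hP : IsIdeal mul P) {x y : H} (hx : x ∈ P) (hy : y ∈ P) :
    x + y ∈ P := by
  simpa using hP.sub_mem hx (hP.neg_mem hy)

theorem IsIdeal.sub_subset (hP : IsIdeal mul P) (hA : A ⊆ P) (hB : B ⊆ P) : A - B ⊆ P := by
  rintro _ ⟨a, ha, b, hb, rfl⟩
  exact hP.sub_mem (hA ha) (hB hb)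

theorem IsIdeal.subset_of_sub_subset_left (hP : IsIdeal mul P) (hA : A.Nonempty)
    (hAP : A ⊆ P) (h : A - B ⊆ P) : B ⊆ P := by
  obtain ⟨a, ha⟩ := hA
  intro b hb
  simpa using hP.sub_mem (hAP ha) (h (sub_mem_sub ha hb))

theorem IsIdeal.subset_of_sub_subset_right (hP : IsIdeal mul P) (hA : A.Nonempty)
    (hAP : A ⊆ P) (h : B - A ⊆ P) : B ⊆ P := by
  obtain ⟨a, ha⟩ := hA
  intro b hb
  simpa using hP.add_mem (h (sub_mem_sub hb ha)) (hAP ha)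

end Ideal

section Sdf

variable {H : Type*} [AddCommGroup H] {mul : H → H → Set H} {P : Set H}

theorem IsSdf.mem_of_sq_subset (hP : IsSdf mul P) {p y : H} (hp : p ∈ P) (hp0 : p ≠ 0)
    (hy0 : y ≠ 0) (hy : sq mul y ⊆ P) : y ∈ P := by
  have hpp : sq mul p ⊆ P := hP.1.2.2 p p hp
  rcases hP.2.2 y p hy0 hp0 (hP.1.sub_subset hy hpp) with h | h
  · simpa using hP.1.add_mem h hp
  · simpa using hP.1.sub_mem h hp

theorem IsSdf.sub_mem_or_add_mem (hP : IsSdf mul P) (hP0 : P ≠ {0})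
    (h00 : (mul 0 0).Nonempty) {x y : H} (h : sq mul x - sq mul y ⊆ P) :
    x - y ∈ P ∨ x + y ∈ P := by
  obtain ⟨p, hp, hp0⟩ := ((nontrivial_iff_ne_singleton hP.1.1).2 hP0).exists_ne 0
  have h00P : sq mul 0 ⊆ P := hP.1.2.2 0 0 hP.1.1
  rcases eq_or_ne x 0 with rfl | hx0 <;> rcases eq_or_ne y 0 with rfl | hy0
  · exact Or.inl (by simpa using hP.1.1)
  · have hy := hP.mem_of_sq_subset hp hp0 hy0 (hP.1.subset_of_sub_subset_left h00 h00P h)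
    exact Or.inr (by simpa using hy)
  · have hx := hP.mem_of_sq_subset hp hp0 hx0 (hP.1.subset_of_sub_subset_right h00 h00P h)
    exact Or.inl (by simpa using hx)
  · exact hP.2.2 x y hx0 hy0 h

end Sdf

section Prod

variable {H₁ H₂ : Type*} [AddCommGroup H₁] [AddCommGroup H₂]
  {m₁ : H₁ → H₁ → Set H₁} {m₂ : H₂ → H₂ → Set H₂} {P : Set H₁}

theorem sq_sub_sq_prodMul_subset_iff (hm₂ : ∀ a b : H₂, (m₂ a b).Nonempty) (x y : H₁ × H₂) :
    sq (prodMul m₁ m₂) x - sq (prodMul m₁ m₂) y ⊆ P ×ˢ univ ↔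
      sq m₁ x.1 - sq m₁ y.1 ⊆ P := by
  obtain ⟨a, ha⟩ := hm₂ x.2 x.2
  obtain ⟨b, hb⟩ := hm₂ y.2 y.2
  constructor
  · intro h
    rintro _ ⟨c, hc, d, hd, rfl⟩
    exact (h (sub_mem_sub (mk_mem_prod hc ha) (mk_mem_prod hd hb))).1
  · intro h
    rintro _ ⟨c, hc, d, hd, rfl⟩
    exact ⟨h (sub_mem_sub hc.1 hd.1), trivial⟩

theorem isIdeal_prod_univ_iff (hm₂ : ∀ a b : H₂, (m₂ a b).Nonempty) :
    IsIdeal (prodMul m₁ m₂) (P ×ˢ univ) ↔ IsIdeal m₁ P := by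
  constructor
  · rintro ⟨h0, hsub, hmul⟩
    refine ⟨h0.1, fun x hx y hy => (hsub (x, 0) ⟨hx, trivial⟩ (y, 0) ⟨hy, trivial⟩).1, ?_⟩
    intro r x hx z hz
    obtain ⟨w, hw⟩ := hm₂ 0 0
    exact (hmul (r, 0) (x, 0) ⟨hx, trivial⟩ (mk_mem_prod hz hw)).1
  · rintro ⟨h0, hsub, hmul⟩
    refine ⟨⟨h0, trivial⟩, fun x hx y hy => ⟨hsub _ hx.1 _ hy.1, trivial⟩, ?_⟩
    intro r x hx z hz
    exact ⟨hmul r.1 x.1 hx.1 hz.1, trivial⟩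

theorem IsSdf.prod_univ (hP : IsSdf m₁ P) (hP0 : P ≠ {0}) (h00 : (m₁ 0 0).Nonempty)
    (hm₂ : ∀ a b : H₂, (m₂ a b).Nonempty) : IsSdf (prodMul m₁ m₂) (P ×ˢ univ) := by
  refine ⟨(isIdeal_prod_univ_iff hm₂).2 hP.1, by simpa using hP.2.1, ?_⟩
  intro x y _ _ h
  rcases hP.sub_mem_or_add_mem hP0 h00 ((sq_sub_sq_prodMul_subset_iff hm₂ x y).1 h) with h | h
  · exact Or.inl ⟨h, trivial⟩
  · exact Or.inr ⟨h, trivial⟩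

theorem IsSdf.of_prod_univ (hm₂ : ∀ a b : H₂, (m₂ a b).Nonempty)
    (hP : IsSdf (prodMul m₁ m₂) (P ×ˢ univ)) : IsSdf m₁ P := by
  refine ⟨(isIdeal_prod_univ_iff hm₂).1 hP.1, by simpa using hP.2.1, ?_⟩
  intro x y hx hy h
  have hx' : ((x, 0) : H₁ × H₂) ≠ 0 := by simp [hx]
  have hy' : ((y, 0) : H₁ × H₂) ≠ 0 := by simp [hy]
  rcases hP.2.2 _ _ hx' hy' ((sq_sub_sq_prodMul_subset_iff hm₂ _ _).2 h) with h | h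
  · exact Or.inl h.1
  · exact Or.inr h.1

end Prod

end Hyper

theorem stmt15_general {H₁ H₂ : Type*} [AddCommGroup H₁] [AddCommGroup H₂]
    (M₁ : MulHyperring H₁) (M₂ : MulHyperring H₂)
    (P₁ : Set H₁)
    (h₁0 : P₁ ≠ ({0} : Set H₁)) :
    Hyper.IsSdf M₁.hmul P₁ ↔
      Hyper.IsSdf (prodMul M₁.hmul M₂.hmul) (P₁ ×ˢ (Set.univ : Set H₂)) :=
  ⟨fun h => h.prod_univ h₁0 (M₁.hmul_nonempty 0 0) M₂.hmul_nonempty,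
    Hyper.IsSdf.of_prod_univ M₂.hmul_nonempty⟩

/-- `P₁` is sdf-absorbing in `H₁` iff `P₁ × H₂` is sdf-absorbing in
`H₁ × H₂`. -/
theorem stmt15 {H₁ H₂ : Type*} [AddCommGroup H₁] [AddCommGroup H₂]
    (M₁ : MulHyperring H₁) (M₂ : MulHyperring H₂)
    (P₁ : Set H₁) (h₁ : Hyper.IsStrongCIdeal M₁.hmul P₁)
    (h₁0 : P₁ ≠ ({0} : Set H₁)) (h₁p : P₁ ≠ Set.univ) :
    Hyper.IsSdf M₁.hmul P₁ ↔
      Hyper.IsSdf (prodMul M₁.hmul M₂.hmul) (P₁ ×ˢ (Set.univ : Set H₂)) :=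
  stmt15_general M₁ M₂ P₁ h₁0
end
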